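/- arXiv:2002.04320 — 4 statements merged into one kernel-verified Lean document; each statement's English description precedes it below -/
import Mathlib

section
/- Let G, e > 0, M > 0 and set t* = G / (e·(G + (4/M²)·e)). Then the function η(t) = t·G - (4/M²)·ω*(t·e) satisfies η(0) = 0 and η(t*) = (4/M²)·ω((M²/4)·G/e) > 0, where ω(s) = s - ln(1+s). Consequently η(t) > 0 for all t ∈ (0, t*]. -/
/-!
Write `η t = t G - c ω*(t e)` with `c = 4 / M²`. Since `ω*` is convex with `ω*(0) = 0`, it is
sub-homogeneous on `[0, 1]`, so `η (a t) ≥ a η t` for `a ∈ [0, 1]`; positivity on `(0, t*]` thus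
reduces to positivity at `t*`. There, with `s = G / (c e)`, one has `t* e = s / (1 + s)`, and the
conjugacy identity `s · s/(1+s) - ω*(s/(1+s)) = ω(s)` gives `η t* = c ω(s) > 0`.
-/

open Real Set

noncomputable def omega (s : ℝ) : ℝ := s - log (1 + s)

noncomputable def omegaStar (s : ℝ) : ℝ := -s - log (1 - s)

lemma omega_pos {s : ℝ} (hs : -1 < s) (hs0 : s ≠ 0) : 0 < omega s := by
  have := log_lt_sub_one_of_pos (by linarith : 0 < 1 + s) (by contrapose! hs0; linarith)
  unfold omega
  linarith

@[simp]
lemma omegaStar_zero : omegaStar 0 = 0 := by simp [omegaStar]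

lemma convexOn_omegaStar : ConvexOn ℝ (Iio 1) omegaStar := by
  refine ⟨convex_Iio 1, fun x hx y hy a b ha hb hab => ?_⟩
  have hlog := strictConcaveOn_log_Ioi.concaveOn.2
    (mem_Ioi.2 (sub_pos.2 hx)) (mem_Ioi.2 (sub_pos.2 hy)) ha hb hab
  have hcomb : a • (1 - x) + b • (1 - y) = 1 - (a • x + b • y) := by
    simp only [smul_eq_mul]; linear_combination hab
  rw [hcomb] at hlog
  simp only [omegaStar, smul_eq_mul] at hlog ⊢
  linarith

lemma mul_div_one_add_sub_omegaStar {s : ℝ} (hs : 1 + s ≠ 0) :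
    s * (s / (1 + s)) - omegaStar (s / (1 + s)) = omega s := by
  have h : 1 - s / (1 + s) = (1 + s)⁻¹ := by field_simp; ring
  rw [omegaStar, omega, h, log_inv]
  field_simp
  ring

lemma ConvexOn.map_smul_le_smul {E : Type*} [AddCommGroup E] [Module ℝ E] {s : Set E}
    {f : E → ℝ} (hf : ConvexOn ℝ s f) (h0 : 0 ∈ s) (hf0 : f 0 = 0) {x : E} (hx : x ∈ s)
    {a : ℝ} (ha0 : 0 ≤ a) (ha1 : a ≤ 1) : f (a • x) ≤ a * f x := by
  simpa [hf0] using hf.2 h0 hx (sub_nonneg.2 ha1) ha0 (sub_add_cancel 1 a)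

theorem eta_positive (G e M : ℝ) (hG : 0 < G) (he : 0 < e) (hM : 0 < M) :
    let tstar := G / (e * (G + (4 / M ^ 2) * e))
    let η : ℝ → ℝ := fun t => t * G - (4 / M ^ 2) * (-(t * e) - Real.log (1 - t * e))
    η 0 = 0 ∧
    η tstar = (4 / M ^ 2) * ((M ^ 2 / 4) * G / e - Real.log (1 + (M ^ 2 / 4) * G / e)) ∧
    0 < η tstar ∧
    ∀ t : ℝ, 0 < t → t ≤ tstar → 0 < η t := by
  intro tstar η
  set c : ℝ := 4 / M ^ 2 with hc_def
  set s : ℝ := M ^ 2 / 4 * G / e with hs_def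
  have hc : 0 < c := by positivity
  have hs : 0 < s := by positivity
  have htstar_e : tstar * e = s / (1 + s) := by
    simp only [tstar, hs_def]; field_simp; ring
  have htstar_G : tstar * G = c * (s * (s / (1 + s))) := by
    simp only [tstar, hc_def, hs_def]; field_simp; ring
  have hη_tstar : η tstar = c * omega s := by
    change tstar * G - c * omegaStar (tstar * e) = c * omega s
    rw [htstar_e, htstar_G, ← mul_div_one_add_sub_omegaStar (by positivity)]
    ring
  have hη_tstar_pos : 0 < η tstar := hη_tstar ▸ mul_pos hc (omega_pos (by linarith) hs.ne')
  refine ⟨by simp [η], hη_tstar, hη_tstar_pos, fun t ht htle => ?_⟩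
  have htstar : 0 < tstar := ht.trans_le htle
  set a := t / tstar
  have ht_eq : t = a * tstar := (div_mul_cancel₀ t htstar.ne').symm
  have hω : omegaStar (a * (tstar * e)) ≤ a * omegaStar (tstar * e) :=
    convexOn_omegaStar.map_smul_le_smul (by norm_num) omegaStar_zero
      (by rw [htstar_e, mem_Iio, div_lt_one (by positivity)]; linarith)
      (by positivity) ((div_le_one htstar).2 htle)
  have hscale : a * η tstar ≤ η t := by
    change a * (tstar * G - c * omegaStar (tstar * e)) ≤ t * G - c * omegaStar (t * e)
    rw [ht_eq, mul_assoc a tstar e]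
    linarith [mul_le_mul_of_nonneg_left hω hc.le]
  exact (mul_pos (by positivity) hη_tstar_pos).trans_le hscale
end

section
/- The function t ↦ t·φ(t), where φ(t) = 1 + t·ln(t/(1+t)), is nondecreasing on [1, ∞); consequently φ(t) ≥ (1 - ln 2)/t for all t ≥ 1. -/
/-!
The derivative `1 + 2t log (t/(1+t)) + t/(1+t)` of `t φ(t)` is nonnegative for `t > 0`: with
`x = (1+t)/t ≥ 1` this is `log x ≤ sinh (log x) = (x - x⁻¹)/2`. The lower bound on `φ` then compares
`t φ(t)` with its value `φ(1) = 1 - log 2` at `t = 1`.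
-/

open Real Set

noncomputable def phi (t : ℝ) : ℝ := 1 + t * log (t / (1 + t))

lemma Real.log_le_half_sub_inv {x : ℝ} (hx : 1 ≤ x) : log x ≤ (x - x⁻¹) / 2 :=
  sinh_log (by linarith) ▸ self_le_sinh_iff.2 (log_nonneg hx)

lemma hasDerivAt_mul_phi {t : ℝ} (ht : 0 < t) :
    HasDerivAt (fun s => s * phi s) (1 + 2 * t * log (t / (1 + t)) + t / (1 + t)) t := by
  have h1t : 1 + t ≠ 0 := by positivity
  have hlog : HasDerivAt (fun s => log (s / (1 + s))) (t⁻¹ - (1 + t)⁻¹) t := by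
    convert ((hasDerivAt_id' t).fun_div ((hasDerivAt_id' t).const_add 1) h1t).log
      (by positivity) using 1
    field_simp
  have h := (hasDerivAt_id' t).fun_mul (((hasDerivAt_id' t).fun_mul hlog).const_add 1)
  refine h.congr_deriv ?_
  field_simp
  ring

lemma one_add_two_mul_log_add_div_nonneg {t : ℝ} (ht : 0 < t) :
    0 ≤ 1 + 2 * t * log (t / (1 + t)) + t / (1 + t) := by
  have hkey := log_le_half_sub_inv (x := (1 + t) / t) (by rw [le_div_iff₀ ht]; linarith)
  rw [inv_div] at hkey
  have hlog : log (t / (1 + t)) = -log ((1 + t) / t) := by rw [← log_inv, inv_div]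
  have hscaled : t * ((1 + t) / t - t / (1 + t)) = 1 + t / (1 + t) := by
    field_simp
    ring
  rw [hlog]
  nlinarith

lemma monotoneOn_mul_phi : MonotoneOn (fun t => t * phi t) (Ioi 0) :=
  monotoneOn_of_hasDerivWithinAt_nonneg (convex_Ioi 0)
    (HasDerivAt.continuousOn fun _ ht => hasDerivAt_mul_phi ht)
    (fun _ ht => (hasDerivAt_mul_phi (by simpa using ht)).hasDerivWithinAt)
    (fun _ ht => one_add_two_mul_log_add_div_nonneg (by simpa using ht))

lemma phi_one : phi 1 = 1 - log 2 := by
  rw [phi, show (1 : ℝ) / (1 + 1) = 2⁻¹ by norm_num, log_inv]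
  ring

theorem t_phi_monotone_and_bound :
    MonotoneOn (fun t : ℝ => t * (1 + t * Real.log (t / (1 + t)))) (Set.Ici (1:ℝ)) ∧
    ∀ t : ℝ, 1 ≤ t → (1 - Real.log 2) / t ≤ 1 + t * Real.log (t / (1 + t)) := by
  have hmono : MonotoneOn (fun t => t * phi t) (Ici 1) :=
    monotoneOn_mul_phi.mono (Ici_subset_Ioi.2 one_pos)
  refine ⟨hmono, fun t ht => ?_⟩
  show (1 - log 2) / t ≤ phi t
  rw [div_le_iff₀ (by linarith), ← phi_one, mul_comm]
  simpa using hmono self_mem_Ici ht ht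
end

section
/- For all y > 0 with γ := 1/(1+y) in (0,1), the quantity 1 + y + y·(1+y)·ln(y/(1+y)) is at least 1/2. -/
private lemma log_ge_aux (t : ℝ) (ht : 0 < t) (ht1 : t ≤ 1) :
    (t - t⁻¹) / 2 ≤ Real.log t := by
  set F : ℝ → ℝ := fun x => Real.log x - (x - x⁻¹) / 2 with hFdef
  have hder : ∀ x : ℝ, 0 < x → HasDerivAt F (x⁻¹ - (1 - -(x^2)⁻¹) / 2) x := by
    intro x hx
    exact (Real.hasDerivAt_log hx.ne').sub
      (((hasDerivAt_id x).sub (hasDerivAt_inv hx.ne')).div_const 2)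
  have hanti : AntitoneOn F (Set.Icc t 1) := by
    apply antitoneOn_of_deriv_nonpos (convex_Icc t 1)
    · intro x hx
      have hxpos : 0 < x := lt_of_lt_of_le ht hx.1
      exact (hder x hxpos).continuousAt.continuousWithinAt
    · intro x hx
      rw [interior_Icc] at hx
      have hxpos : 0 < x := lt_trans ht hx.1
      exact (hder x hxpos).differentiableAt.differentiableWithinAt
    · intro x hx
      rw [interior_Icc] at hx
      have hxpos : 0 < x := lt_trans ht hx.1
      rw [(hder x hxpos).deriv]
      have h1 : x⁻¹ = 1 / x := one_div x |>.symm
      have h2 : (x^2)⁻¹ = 1 / x^2 := one_div (x^2) |>.symm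
      rw [h1, h2]
      have hx2 : (0:ℝ) < x^2 := by positivity
      have := sq_nonneg (x - 1)
      have hle : 1 / x - (1 - -(1/x^2))/2 = -((x-1)^2) / (2*x^2) := by
        field_simp; ring
      rw [hle]
      apply div_nonpos_of_nonpos_of_nonneg <;> nlinarith
  have h1 : F 1 ≤ F t := hanti (Set.mem_Icc.mpr ⟨le_refl t, ht1⟩)
    (Set.mem_Icc.mpr ⟨ht1, le_refl 1⟩) ht1
  simp only [hFdef, Real.log_one, inv_one] at h1
  linarith

theorem full_step_key_inequality (y : ℝ) (hy : 0 < y) (hγ : 1 / (1 + y) ∈ Set.Ioo (0:ℝ) 1) :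
    (1:ℝ) / 2 ≤ 1 + y + y * (1 + y) * Real.log (y / (1 + y)) := by
  have h1y : (0:ℝ) < 1 + y := by linarith
  set t : ℝ := y / (1 + y) with htdef
  have htpos : 0 < t := div_pos hy h1y
  have ht1 : t ≤ 1 := by
    rw [htdef, div_le_one h1y]; linarith
  have hkey := log_ge_aux t htpos ht1
  have hinv : t⁻¹ = (1 + y) / y := by
    rw [htdef, inv_div]
  have halg : y * (1 + y) * ((t - t⁻¹) / 2) = -(2 * y + 1) / 2 := by
    rw [hinv, htdef]
    field_simp
    ring
  have hmul : y * (1 + y) * ((t - t⁻¹) / 2) ≤ y * (1 + y) * Real.log t := by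
    apply mul_le_mul_of_nonneg_left hkey
    positivity
  rw [halg] at hmul
  linarith
end

section
/- Let γ_u > 1 ≥ γ_d > 0 and suppose a backtracking procedure at step k performs m_k ≥ 1 function evaluations, where the Lipschitz estimates satisfy L_k ≥ γ_d·L_{k-1}·γ_u^{m_k - 1}. Then m_k ≤ 1 + ln(L_k/L_{k-1})/ln(γ_u) - ln(γ_d)/ln(γ_u), and summing, N_k := Σ_{i=0}^{k} m_i ≤ (k+1)(1 - ln(γ_d)/ln(γ_u)) + ln(L_k/L_{-1})/ln(γ_u). -/
theorem backtracking_evaluation_bound (γu γd : ℝ) (hu : 1 < γu) (hd0 : 0 < γd) (hd1 : γd ≤ 1)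
    (Lest : ℕ → ℝ) (hL : ∀ j, 0 < Lest j)
    (m : ℕ → ℕ) (hm : ∀ k, 1 ≤ m k)
    (hstep : ∀ k : ℕ, γd * Lest k * γu ^ (m k - 1) ≤ Lest (k + 1)) :
    (∀ k : ℕ, (m k : ℝ) ≤ 1 + Real.log (Lest (k + 1) / Lest k) / Real.log γu -
      Real.log γd / Real.log γu) ∧
    ∀ k : ℕ, ((∑ i ∈ Finset.range (k + 1), m i : ℕ) : ℝ) ≤
      ((k:ℝ) + 1) * (1 - Real.log γd / Real.log γu) +
        Real.log (Lest (k + 1) / Lest 0) / Real.log γu := by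
  have hlgu : 0 < Real.log γu := Real.log_pos hu
  have key : ∀ k : ℕ, (m k : ℝ) ≤ 1 + Real.log (Lest (k + 1) / Lest k) / Real.log γu -
      Real.log γd / Real.log γu := by
    intro k
    have hgu0 : (0:ℝ) < γu := lt_trans one_pos hu
    have hpos : 0 < γd * Lest k * γu ^ (m k - 1) :=
      mul_pos (mul_pos hd0 (hL k)) (pow_pos hgu0 _)
    have hlog := Real.log_le_log hpos (hstep k)
    rw [Real.log_mul (ne_of_gt (mul_pos hd0 (hL k))) (ne_of_gt (pow_pos hgu0 _)),
      Real.log_mul (ne_of_gt hd0) (ne_of_gt (hL k)), Real.log_pow] at hlog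
    have hmk : ((m k - 1 : ℕ) : ℝ) = (m k : ℝ) - 1 := by
      have := hm k; push_cast [Nat.cast_sub this]; ring
    rw [hmk] at hlog
    have hdiv : Real.log (Lest (k+1) / Lest k) = Real.log (Lest (k+1)) - Real.log (Lest k) :=
      Real.log_div (ne_of_gt (hL (k+1))) (ne_of_gt (hL k))
    rw [hdiv]
    have h2 : ((m k : ℝ) - 1) ≤ (Real.log (Lest (k+1)) - Real.log (Lest k) - Real.log γd) / Real.log γu := by
      rw [le_div_iff₀ hlgu]
      nlinarith
    linarith [sub_div (Real.log (Lest (k+1)) - Real.log (Lest k)) (Real.log γd) (Real.log γu)]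
  refine ⟨key, fun k => ?_⟩
  push_cast
  calc (∑ i ∈ Finset.range (k + 1), (m i : ℝ))
      ≤ ∑ i ∈ Finset.range (k + 1),
          (1 + Real.log (Lest (i + 1) / Lest i) / Real.log γu - Real.log γd / Real.log γu) :=
        Finset.sum_le_sum fun i _ => key i
    _ = ((k:ℝ) + 1) * (1 - Real.log γd / Real.log γu) +
        (∑ i ∈ Finset.range (k + 1), (Real.log (Lest (i + 1)) - Real.log (Lest i))) / Real.log γu := by
        rw [Finset.sum_div]
        have : ∀ i ∈ Finset.range (k+1),
            (1 + Real.log (Lest (i + 1) / Lest i) / Real.log γu - Real.log γd / Real.log γu)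
            = (1 - Real.log γd / Real.log γu) +
              (Real.log (Lest (i + 1)) - Real.log (Lest i)) / Real.log γu := by
          intro i _
          rw [Real.log_div (ne_of_gt (hL (i+1))) (ne_of_gt (hL i))]; ring
        rw [Finset.sum_congr rfl this, Finset.sum_add_distrib, Finset.sum_const,
          Finset.card_range]
        push_cast; ring
    _ = ((k:ℝ) + 1) * (1 - Real.log γd / Real.log γu) +
        Real.log (Lest (k + 1) / Lest 0) / Real.log γu := by
        rw [Finset.sum_range_sub (fun i => Real.log (Lest i)),
          Real.log_div (ne_of_gt (hL (k+1))) (ne_of_gt (hL 0))]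
end
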